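/- For (r, r′) ∈ ℂ², one has t¹(r, r′)(α, α′) = 0 for all α, α′ ∈ ℕ if and only if (r, r′) ∈ L_even. -/

import Mathlib

noncomputable section

/-- ρ = (n-1)/2 as a complex number. -/
def rho (n : ℕ) : ℂ := ((n : ℂ) - 1) / 2

/-- ρ' = (n-2)/2 as a complex number. -/
def rho' (n : ℕ) : ℂ := ((n : ℂ) - 2) / 2

/-- A diagonal sequence for `(r, r')`. -/
def IsDiagSeq (n : ℕ) (r r' : ℂ) (s : ℕ → ℂ) : Prop :=
  ∀ α : ℕ, (2*r' + 2*(α : ℂ) + (n : ℂ) - 2) * s α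
    = (2*r + 2*(α : ℂ) + (n : ℂ) - 1) * s (α + 1)

/-- L_even. -/
def Leven (n : ℕ) : Set (ℂ × ℂ) :=
  {p | ∃ i j : ℕ, p.1 = -rho n - (i : ℂ) ∧ p.2 = -rho' n - (j : ℂ) ∧ ∃ k : ℕ, i = j + 2*k}

/-- L_odd. -/
def Lodd (n : ℕ) : Set (ℂ × ℂ) :=
  {p | ∃ i j : ℕ, p.1 = -rho n - (i : ℂ) ∧ p.2 = -rho' n - (j : ℂ) ∧ ∃ k : ℕ, i = j + 2*k + 1}

/-- An admissible solution `t : ℕ × ℕ → ℂ` for `(r, r')`: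
`t(α,α') = 0` when `α' > α` or `α − α'` is odd (equivalently `α + α'` is odd),
and the relations (R1), (R2) hold for all `α ≥ α'` with `α − α'` even.
The natural-subtraction index `α - 1` is harmless, since in (R1) its coefficient
`(α − α')` vanishes when `α = α'`, and in (R2) we have `α ≥ α' ≥ 1`. -/
def IsAdmissible (n : ℕ) (r r' : ℂ) (t : ℕ → ℕ → ℂ) : Prop :=
  (∀ α α' : ℕ, (α < α' ∨ Odd (α + α')) → t α α' = 0) ∧
  (∀ α α' : ℕ, α' ≤ α → Even (α + α') →
    ((2*(α : ℂ) + (n : ℂ) - 2) * (2*r' + 2*(α' : ℂ) + (n : ℂ) - 2) * t α α'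
      = ((α : ℂ) + (α' : ℂ) + (n : ℂ) - 2) * (2*r + 2*(α : ℂ) + (n : ℂ) - 1)
          * t (α + 1) (α' + 1)
        + ((α : ℂ) - (α' : ℂ)) * (2*r - 2*(α : ℂ) - (n : ℂ) + 3)
          * t (α - 1) (α' + 1)) ∧
    (1 ≤ α' →
      (2*(α : ℂ) + (n : ℂ) - 2) * (2*r' - 2*(α' : ℂ) - (n : ℂ) + 4) * t α α'
      = ((α : ℂ) - (α' : ℂ) + 1) * (2*r + 2*(α : ℂ) + (n : ℂ) - 1)
          * t (α + 1) (α' - 1)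
        + ((α : ℂ) + (α' : ℂ) + (n : ℂ) - 3) * (2*r - 2*(α : ℂ) - (n : ℂ) + 3)
          * t (α - 1) (α' - 1)))

/-- The spectral function `t¹(r,r')` of Corollary 4.12 (1):
`t¹(r,r')(α,α') = (r'+ρ')_{α'} · Σ_{k=0}^{(α−α')/2} 2^{4k} ((α+α'+n−2)/2)_k (−(α−α')/2)_k
((2r+2r'+1)/4)_k ((2r−2r'+1)/4)_k / (2k)! · (1/Γ(r+ρ+α'+2k))`
for `α' ≤ α` with `α − α'` even, and `0` otherwise. -/
def t1 (n : ℕ) (r r' : ℂ) (α α' : ℕ) : ℂ :=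
  if α < α' ∨ Odd (α + α') then 0
  else (ascPochhammer ℂ α').eval (r' + rho' n) *
    ∑ k ∈ Finset.range ((α - α') / 2 + 1),
      (2 : ℂ)^(4*k) * (ascPochhammer ℂ k).eval (((α : ℂ) + (α' : ℂ) + (n : ℂ) - 2)/2) *
        (ascPochhammer ℂ k).eval (-(((α : ℂ) - (α' : ℂ))/2)) *
        (ascPochhammer ℂ k).eval ((2*r + 2*r' + 1)/4) *
        (ascPochhammer ℂ k).eval ((2*r - 2*r' + 1)/4) / ((2*k).factorial : ℂ) *
        (Complex.Gamma (r + rho n + (α' : ℂ) + 2*(k : ℂ)))⁻¹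


/-!
A Pochhammer symbol `(x)_k` vanishes exactly for `x ∈ {0, -1, …, -(k-1)}` and `1/Γ` exactly on
`-ℕ`. On the diagonal `t¹(α, α) = (r'+ρ')_α / Γ(r+ρ+α)`, so the vanishing of `t¹` forces first
`r + ρ = -i` and then `r' + ρ' = -j` with `j ≤ i`. At such a point `(2r-2r'+1)/4 = -(i-j)/2`.
If `i - j = 2m`, the summands with `k ≤ m` are killed by `1/Γ` and those with `k > m` by
`(-m)_k`. If `i - j = 2m + 1`, then at `(α, α') = (j+2m+2, j)` only the summand `k = m + 1`
escapes `1/Γ`, and none of its Pochhammer factors vanishes.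
-/

open Finset Complex

lemma ascPochhammer_eval_ne_zero_of_two_mul_eq {x : ℂ} {N : ℤ} {k : ℕ} (hx : 2 * x = N)
    (h : ∀ l < k, N ≠ -(2 * l)) : (ascPochhammer ℂ k).eval x ≠ 0 := by
  rw [Ne, ascPochhammer_eval_eq_zero_iff]
  rintro ⟨l, hl, hlx⟩
  refine h l hl ?_
  have : ((N : ℤ) : ℂ) = ((-(2 * l : ℤ) : ℤ) : ℂ) := by push_cast; linear_combination -hx + 2 * hlx
  exact_mod_cast this

def t1Term (n : ℕ) (r r' : ℂ) (α α' k : ℕ) : ℂ :=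
  (2 : ℂ)^(4*k) * (ascPochhammer ℂ k).eval (((α : ℂ) + (α' : ℂ) + (n : ℂ) - 2)/2) *
    (ascPochhammer ℂ k).eval (-(((α : ℂ) - (α' : ℂ))/2)) *
    (ascPochhammer ℂ k).eval ((2*r + 2*r' + 1)/4) *
    (ascPochhammer ℂ k).eval ((2*r - 2*r' + 1)/4) / ((2*k).factorial : ℂ) *
    (Gamma (r + rho n + (α' : ℂ) + 2*(k : ℂ)))⁻¹

section

variable {n : ℕ} {r r' : ℂ}

lemma t1_of_le {α α' : ℕ} (hle : α' ≤ α) (heven : Even (α + α')) :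
    t1 n r r' α α' = (ascPochhammer ℂ α').eval (r' + rho' n) *
      ∑ k ∈ range ((α - α') / 2 + 1), t1Term n r r' α α' k := by
  rw [t1, if_neg (by simp [hle, Nat.not_odd_iff_even.2 heven])]
  rfl

lemma t1_self (α : ℕ) :
    t1 n r r' α α = (ascPochhammer ℂ α).eval (r' + rho' n) * (Gamma (r + rho n + α))⁻¹ := by
  simp [t1_of_le le_rfl (⟨α, rfl⟩ : Even (α + α)), t1Term]

lemma t1Term_eq_zero_of_Gamma_arg_eq_neg_nat {α α' k : ℕ} (d : ℕ)
    (h : r + rho n + α' + 2 * k = -d) : t1Term n r r' α α' k = 0 := by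
  rw [t1Term, h, Gamma_neg_nat_eq_zero, inv_zero, mul_zero]

lemma t1_eq_zero_of_mem_Leven (h : (r, r') ∈ Leven n) (α α' : ℕ) : t1 n r r' α α' = 0 := by
  obtain ⟨i, j, rfl, rfl, m, rfl⟩ := h
  by_cases hzero : α < α' ∨ Odd (α + α')
  · rw [t1, if_pos hzero]
  rw [not_or, not_lt, Nat.not_odd_iff_even] at hzero
  rw [t1_of_le hzero.1 hzero.2]
  rcases lt_or_ge j α' with hj | hj
  · rw [show -rho' n - j + rho' n = -(j : ℂ) by ring, ascPochhammer_eval_neg_coe_nat_of_lt hj,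
      zero_mul]
  refine mul_eq_zero_of_right _ (sum_eq_zero fun k _ => ?_)
  rcases le_or_gt k m with hk | hk
  · refine t1Term_eq_zero_of_Gamma_arg_eq_neg_nat (j + 2 * m - (α' + 2 * k)) ?_
    push_cast [Nat.cast_sub (by omega : α' + 2 * k ≤ j + 2 * m)]
    ring
  · rw [t1Term, show (2 * (-rho n - ((j + 2 * m : ℕ) : ℂ)) - 2 * (-rho' n - j) + 1) / 4
        = -(m : ℂ) by simp only [rho, rho']; push_cast; ring,
      ascPochhammer_eval_neg_coe_nat_of_lt hk]
    simp

lemma t1Term_ne_zero_of_odd (hn : 2 ≤ n) (j m : ℕ) :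
    t1Term n (-rho n - ((j + 2 * m + 1 : ℕ) : ℂ)) (-rho' n - j) (j + 2 * m + 2) j (m + 1) ≠ 0 := by
  have hΓ : -rho n - ((j + 2 * m + 1 : ℕ) : ℂ) + rho n + (j : ℕ) + 2 * ((m + 1 : ℕ) : ℂ) = 1 := by
    push_cast; ring
  rw [t1Term, hΓ, Gamma_one, inv_one, mul_one]
  refine div_ne_zero (mul_ne_zero (mul_ne_zero (mul_ne_zero (mul_ne_zero
    (pow_ne_zero _ two_ne_zero) ?_) ?_) ?_) ?_) (Nat.cast_ne_zero.2 (Nat.factorial_ne_zero _))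
  · exact ascPochhammer_eval_ne_zero_of_two_mul_eq (N := 2 * j + 2 * m + n)
      (by push_cast; ring) (by omega)
  · exact ascPochhammer_eval_ne_zero_of_two_mul_eq (N := -(2 * m + 2))
      (by push_cast; ring) (by omega)
  · exact ascPochhammer_eval_ne_zero_of_two_mul_eq (N := 1 - n - 2 * j - 2 * m)
      (by simp only [rho, rho']; push_cast; ring) (by omega)
  · exact ascPochhammer_eval_ne_zero_of_two_mul_eq (N := -(2 * m + 1))
      (by simp only [rho, rho']; push_cast; ring) (by omega)

lemma t1_ne_zero_of_odd (hn : 2 ≤ n) (j m : ℕ) :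
    t1 n (-rho n - ((j + 2 * m + 1 : ℕ) : ℂ)) (-rho' n - j) (j + 2 * m + 2) j ≠ 0 := by
  rw [t1_of_le (by omega) ⟨j + m + 1, by ring⟩, show (j + 2 * m + 2 - j) / 2 + 1 = m + 2 by omega,
    sum_eq_single_of_mem (m + 1) (mem_range.2 (by omega))]
  · refine mul_ne_zero ?_ (t1Term_ne_zero_of_odd hn j m)
    exact ascPochhammer_eval_ne_zero_of_two_mul_eq (N := -(2 * j)) (by push_cast; ring)
      (by omega)
  · intro k hk _
    have hkm : k ≤ m := by rw [mem_range] at hk; omega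
    refine t1Term_eq_zero_of_Gamma_arg_eq_neg_nat (2 * m + 1 - 2 * k) ?_
    push_cast [Nat.cast_sub (by omega : 2 * k ≤ 2 * m + 1)]
    ring

lemma exists_nat_of_forall_t1_eq_zero (h : ∀ α α', t1 n r r' α α' = 0) :
    ∃ i j : ℕ, j ≤ i ∧ r = -rho n - i ∧ r' = -rho' n - j := by
  obtain ⟨i, hi⟩ : ∃ i : ℕ, r + rho n = -i := by
    simpa [t1_self, Gamma_eq_zero_iff] using h 0 0
  obtain ⟨j, hj, hje⟩ : ∃ j < i + 1, (j : ℂ) = -(r' + rho' n) := by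
    have h_diag := h (i + 1) (i + 1)
    rwa [t1_self, show r + rho n + ((i + 1 : ℕ) : ℂ) = 1 by push_cast; linear_combination hi,
      Gamma_one, inv_one, mul_one, ascPochhammer_eval_eq_zero_iff] at h_diag
  exact ⟨i, j, by omega, by linear_combination hi, by linear_combination hje⟩

end

theorem statement8 (n : ℕ) (hn : 3 ≤ n) (r r' : ℂ) :
    (∀ α α' : ℕ, t1 n r r' α α' = 0) ↔ (r, r') ∈ Leven n := by
  refine ⟨fun h => ?_, t1_eq_zero_of_mem_Leven⟩
  obtain ⟨i, j, hji, rfl, rfl⟩ := exists_nat_of_forall_t1_eq_zero h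
  obtain ⟨m, hm⟩ | ⟨m, hm⟩ := Nat.even_or_odd (i - j)
  · exact ⟨i, j, rfl, rfl, m, by omega⟩
  · obtain rfl : i = j + 2 * m + 1 := by omega
    exact absurd (h _ _) (t1_ne_zero_of_odd (by omega) j m)

end
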